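/- Let m be an odd positive integer and write u = a + 2b with a ∈ T⋆ = T∖{0,1} and b ∈ T. Then Σ_{a∈T⋆} Σ_{b∈T} S₊(u)·S₊(u+2) = 0 and Σ_{a∈T⋆} Σ_{b∈T} S₋(u)·S₋(u+2) = 0. -/
import Mathlib


open Finset
open scoped Classical

/-- `i^a` for `a ∈ ℤ/4ℤ`; well defined since `i` has order 4. -/
noncomputable def zi (a : ZMod 4) : ℂ := Complex.I ^ a.val

/-- The exponential sum `S₊(u) = Σ_{x∈T} i^{Tr(ux)} + Σ_{x∈T} i^{3·Tr(ux)}`. -/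
noncomputable def Splus {R : Type*} [CommRing R] (T : Finset R) (Tr : R → ZMod 4) (u : R) : ℂ :=
  (∑ x ∈ T, zi (Tr (u * x))) + ∑ x ∈ T, zi (3 * Tr (u * x))

/-- The exponential sum `S₋(u) = Σ_{x∈T} i^{Tr(ux)} - Σ_{x∈T} i^{3·Tr(ux)}`. -/
noncomputable def Sminus {R : Type*} [CommRing R] (T : Finset R) (Tr : R → ZMod 4) (u : R) : ℂ :=
  (∑ x ∈ T, zi (Tr (u * x))) - ∑ x ∈ T, zi (3 * Tr (u * x))

lemma I_pow_mod (n : ℕ) : (Complex.I) ^ (n % 4) = Complex.I ^ n := by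
  conv_rhs => rw [← Nat.div_add_mod n 4]
  rw [pow_add, pow_mul, Complex.I_pow_four, one_pow, one_mul]

lemma zi_add (s t : ZMod 4) : zi (s + t) = zi s * zi t := by
  unfold zi
  rw [← pow_add, ZMod.val_add, I_pow_mod]

lemma zi_zero : zi 0 = 1 := by simp [zi]

lemma zi_two : zi 2 = -1 := by
  have h : (2 : ZMod 4).val = 2 := rfl
  rw [zi, h, Complex.I_sq]

lemma odd_mul (ε : ZMod 4) (hε : ε = 1 ∨ ε = 3) (s : ZMod 4) (hs : 2 * s = 0) :
    ε * s = s := by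
  rcases hε with rfl | rfl
  · rw [one_mul]
  · linear_combination hs

section Ring
variable {R : Type*} [CommRing R]

lemma sq_zero_binom (y z : R) (hz : z * z = 0) :
    ∀ n : ℕ, (y + z) ^ n = y ^ n + (n : R) * y ^ (n - 1) * z := by
  intro n
  induction n with
  | zero => simp
  | succ n ih =>
    rw [pow_succ, ih]
    rcases Nat.eq_zero_or_pos n with h0 | hpos
    · subst h0; simp
    · obtain ⟨k, rfl⟩ : ∃ k, n = k + 1 := ⟨n - 1, (Nat.succ_pred_eq_of_pos hpos).symm⟩
      simp only [Nat.add_sub_cancel]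
      push_cast
      linear_combination ((k : R) + 1) * y ^ k * hz

lemma freshman (u v : R) : ∀ j : ℕ, ∃ t : R, (u + v) ^ 2 ^ j = u ^ 2 ^ j + v ^ 2 ^ j + 2 * t := by
  intro j
  induction j with
  | zero => exact ⟨0, by norm_num⟩
  | succ j ih =>
    obtain ⟨t, h⟩ := ih
    refine ⟨u ^ 2 ^ j * v ^ 2 ^ j + 2 * (t * (u ^ 2 ^ j + v ^ 2 ^ j)) + 2 * (t * t), ?_⟩
    have e : ∀ w : R, w ^ 2 ^ (j + 1) = (w ^ 2 ^ j) ^ 2 := fun w => by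
      rw [← pow_mul, pow_succ]
    rw [e, e, e, h]; ring

variable [CharP R 4]

lemma four_zero : (4 : R) = 0 := by exact_mod_cast CharP.cast_eq_zero R 4

lemma tt_sq (t : R) : (2 * t) * (2 * t) = 0 := by
  linear_combination (t * t) * (four_zero (R := R))

lemma tt_pow (t : R) {n : ℕ} (hn : 2 ≤ n) : (2 * t) ^ n = 0 := by
  obtain ⟨k, rfl⟩ := Nat.exists_eq_add_of_le hn
  rw [pow_add, pow_two, tt_sq, zero_mul]

lemma cast_two_pow_mul_two (m : ℕ) (hm : 1 ≤ m) : ((2 ^ m : ℕ) : R) * 2 = 0 := by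
  have h : ((2 ^ (m + 1) : ℕ) : R) = 0 := by
    apply (CharP.cast_eq_zero_iff R 4 _).mpr
    have h4 : (4 : ℕ) = 2 ^ 2 := by norm_num
    rw [h4]; exact pow_dvd_pow 2 (by omega)
  calc ((2 ^ m : ℕ) : R) * 2 = ((2 ^ (m + 1) : ℕ) : R) := by push_cast [pow_succ]; ring
    _ = 0 := h

lemma pow_add_two_mul (m : ℕ) (hm : 1 ≤ m) (y t : R) :
    (y + 2 * t) ^ 2 ^ m = y ^ 2 ^ m := by
  rw [sq_zero_binom y (2 * t) (tt_sq t)]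
  have h : ((2 ^ m : ℕ) : R) * y ^ (2 ^ m - 1) * (2 * t) = 0 := by
    have h2 := cast_two_pow_mul_two (R := R) m hm
    linear_combination (y ^ (2 ^ m - 1) * t) * h2
  rw [h, add_zero]

lemma two_mul_pow_pow (j : ℕ) (A t : R) : 2 * (A + 2 * t) ^ 2 ^ j = 2 * A ^ 2 ^ j := by
  rw [sq_zero_binom A (2 * t) (tt_sq t)]
  linear_combination (((2 ^ j : ℕ) : R) * A ^ (2 ^ j - 1) * t) * (four_zero (R := R))

end Ring
section T
variable {R : Type*} [CommRing R] [CharP R 4] {m : ℕ} {T : Finset R}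

lemma mem_T_zero (hT : ∀ z : R, z ∈ T ↔ z ^ 2 ^ m = z) : (0 : R) ∈ T :=
  (hT 0).mpr (zero_pow (by positivity))

lemma mem_T_one (hT : ∀ z : R, z ∈ T ↔ z ^ 2 ^ m = z) : (1 : R) ∈ T :=
  (hT 1).mpr (one_pow _)

lemma mem_T_mul (hT : ∀ z : R, z ∈ T ↔ z ^ 2 ^ m = z) {x y : R} (hx : x ∈ T) (hy : y ∈ T) :
    x * y ∈ T :=
  (hT _).mpr (by rw [mul_pow, (hT x).mp hx, (hT y).mp hy])

lemma T_eq_of_sub (hm : 1 ≤ m) (hT : ∀ z : R, z ∈ T ↔ z ^ 2 ^ m = z)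
    {x y : R} (hx : x ∈ T) (hy : y ∈ T) {t : R} (h : x = y + 2 * t) : x = y := by
  have hxp := (hT x).mp hx
  calc x = x ^ 2 ^ m := hxp.symm
    _ = (y + 2 * t) ^ 2 ^ m := by rw [h]
    _ = y ^ 2 ^ m := pow_add_two_mul m hm y t
    _ = y := (hT y).mp hy

/-- The Frobenius sum: for `u v ∈ T`, `(u+v)^(2^m)` lies in `T`, is congruent to
`u+v` mod 2, and `2·(u+v)^(2^m) = 2u+2v`. -/
lemma frob_spec (hm : 1 ≤ m) (hT : ∀ z : R, z ∈ T ↔ z ^ 2 ^ m = z)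
    {u v : R} (hu : u ∈ T) (hv : v ∈ T) :
    (u + v) ^ 2 ^ m ∈ T ∧ (∃ t : R, (u + v) ^ 2 ^ m = u + v + 2 * t) ∧
      2 * ((u + v) ^ 2 ^ m) = 2 * u + 2 * v := by
  obtain ⟨t, hft⟩ := freshman u v m
  rw [(hT u).mp hu, (hT v).mp hv] at hft
  refine ⟨?_, ⟨t, hft⟩, ?_⟩
  · refine (hT _).mpr ?_
    calc ((u + v) ^ 2 ^ m) ^ 2 ^ m = ((u + v) + 2 * t) ^ 2 ^ m := by rw [← hft]
      _ = (u + v) ^ 2 ^ m := pow_add_two_mul m hm _ t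
  · rw [hft]
    linear_combination t * (four_zero (R := R))

lemma diag_iff (hm : 1 ≤ m) (hT : ∀ z : R, z ∈ T ↔ z ^ 2 ^ m = z)
    {x y : R} (hx : x ∈ T) (hy : y ∈ T) : (x + y) ^ 2 ^ m = 0 ↔ x = y := by
  constructor
  · intro h0
    obtain ⟨-, ⟨t, hft⟩, -⟩ := frob_spec hm hT hx hy
    rw [h0] at hft
    have hxy : x = y + 2 * (-y - t) := by linear_combination -hft
    exact T_eq_of_sub hm hT hx hy hxy
  · rintro rfl
    have h2 : x + x = 2 * x := by ring
    rw [h2]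
    exact tt_pow x (by calc 2 = 2 ^ 1 := (pow_one 2).symm
      _ ≤ 2 ^ m := Nat.pow_le_pow_right (by norm_num) hm)

end T
section Tr
set_option linter.unusedSectionVars false
variable {R : Type*} [CommRing R] [CharP R 4] {m : ℕ} {T : Finset R} {Tr : R → ZMod 4}

local notation "c" => ZMod.castHom (dvd_refl 4) R

lemma cTr_x (hT : ∀ z : R, z ∈ T ↔ z ^ 2 ^ m = z)
    (hTr : ∀ x ∈ T, ∀ y ∈ T, c (Tr (x + 2 * y)) = ∑ j ∈ Finset.range m, (x ^ 2 ^ j + 2 * y ^ 2 ^ j))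
    {x : R} (hx : x ∈ T) : c (Tr x) = ∑ j ∈ Finset.range m, x ^ 2 ^ j := by
  have h := hTr x hx 0 (mem_T_zero hT)
  rw [show x + 2 * 0 = x by ring] at h
  rw [h]
  refine Finset.sum_congr rfl fun j _ => ?_
  rw [zero_pow (by positivity), mul_zero, add_zero]

lemma cTr_2 (hT : ∀ z : R, z ∈ T ↔ z ^ 2 ^ m = z)
    (hTr : ∀ x ∈ T, ∀ y ∈ T, c (Tr (x + 2 * y)) = ∑ j ∈ Finset.range m, (x ^ 2 ^ j + 2 * y ^ 2 ^ j))
    {y : R} (hy : y ∈ T) : c (Tr (2 * y)) = ∑ j ∈ Finset.range m, 2 * y ^ 2 ^ j := by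
  have h := hTr 0 (mem_T_zero hT) y hy
  rw [show (0 : R) + 2 * y = 2 * y by ring] at h
  rw [h]
  refine Finset.sum_congr rfl fun j _ => ?_
  rw [zero_pow (by positivity), zero_add]

lemma Tr_split (hT : ∀ z : R, z ∈ T ↔ z ^ 2 ^ m = z)
    (hTr : ∀ x ∈ T, ∀ y ∈ T, c (Tr (x + 2 * y)) = ∑ j ∈ Finset.range m, (x ^ 2 ^ j + 2 * y ^ 2 ^ j))
    {x y : R} (hx : x ∈ T) (hy : y ∈ T) : Tr (x + 2 * y) = Tr x + Tr (2 * y) := by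
  apply ZMod.castHom_injective R
  rw [map_add, hTr x hx y hy, cTr_x hT hTr hx, cTr_2 hT hTr hy, ← Finset.sum_add_distrib]

lemma two_Tr2 (hT : ∀ z : R, z ∈ T ↔ z ^ 2 ^ m = z)
    (hTr : ∀ x ∈ T, ∀ y ∈ T, c (Tr (x + 2 * y)) = ∑ j ∈ Finset.range m, (x ^ 2 ^ j + 2 * y ^ 2 ^ j))
    {y : R} (hy : y ∈ T) : 2 * Tr (2 * y) = 0 := by
  apply ZMod.castHom_injective R
  rw [map_mul, map_zero, map_ofNat, cTr_2 hT hTr hy, Finset.mul_sum]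
  refine Finset.sum_eq_zero fun j _ => ?_
  linear_combination (y ^ 2 ^ j) * (four_zero (R := R))

lemma two_Tr_x (hT : ∀ z : R, z ∈ T ↔ z ^ 2 ^ m = z)
    (hTr : ∀ x ∈ T, ∀ y ∈ T, c (Tr (x + 2 * y)) = ∑ j ∈ Finset.range m, (x ^ 2 ^ j + 2 * y ^ 2 ^ j))
    {x : R} (hx : x ∈ T) : 2 * Tr x = Tr (2 * x) := by
  apply ZMod.castHom_injective R
  rw [map_mul, map_ofNat, cTr_x hT hTr hx, cTr_2 hT hTr hx, Finset.mul_sum]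

lemma Tr_zero (hT : ∀ z : R, z ∈ T ↔ z ^ 2 ^ m = z)
    (hTr : ∀ x ∈ T, ∀ y ∈ T, c (Tr (x + 2 * y)) = ∑ j ∈ Finset.range m, (x ^ 2 ^ j + 2 * y ^ 2 ^ j)) :
    Tr (0 : R) = 0 := by
  apply ZMod.castHom_injective R
  have h := cTr_x hT hTr (mem_T_zero hT)
  rw [h, map_zero]
  exact Finset.sum_eq_zero fun j _ => zero_pow (by positivity)

lemma Tr2_add (hm : 1 ≤ m) (hT : ∀ z : R, z ∈ T ↔ z ^ 2 ^ m = z)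
    (hTr : ∀ x ∈ T, ∀ y ∈ T, c (Tr (x + 2 * y)) = ∑ j ∈ Finset.range m, (x ^ 2 ^ j + 2 * y ^ 2 ^ j))
    {u v : R} (hu : u ∈ T) (hv : v ∈ T) : Tr (2 * u + 2 * v) = Tr (2 * u) + Tr (2 * v) := by
  obtain ⟨hwT, ⟨t, hft⟩, h2w⟩ := frob_spec hm hT hu hv
  rw [← h2w]
  apply ZMod.castHom_injective R
  rw [map_add, cTr_2 hT hTr hwT, cTr_2 hT hTr hu, cTr_2 hT hTr hv, ← Finset.sum_add_distrib]
  refine Finset.sum_congr rfl fun j _ => ?_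
  rw [hft, show u + v + 2 * t = (u + v) + 2 * t from rfl, two_mul_pow_pow j (u + v) t]
  obtain ⟨s, hs⟩ := freshman u v j
  rw [hs]
  linear_combination s * (four_zero (R := R))

lemma Tr_two_val (hm : Odd m) (hT : ∀ z : R, z ∈ T ↔ z ^ 2 ^ m = z)
    (hTr : ∀ x ∈ T, ∀ y ∈ T, c (Tr (x + 2 * y)) = ∑ j ∈ Finset.range m, (x ^ 2 ^ j + 2 * y ^ 2 ^ j)) :
    Tr (2 : R) = 2 := by
  apply ZMod.castHom_injective R
  have h : c (Tr (2 * (1 : R))) = ∑ j ∈ Finset.range m, 2 * (1 : R) ^ 2 ^ j :=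
    cTr_2 hT hTr (mem_T_one hT)
  rw [mul_one] at h
  rw [h, map_ofNat]
  obtain ⟨k, hk⟩ := hm
  subst hk
  rw [Finset.sum_congr rfl fun j _ => by rw [one_pow]]
  rw [Finset.sum_const, Finset.card_range, nsmul_eq_mul]
  push_cast
  linear_combination (k : R) * (four_zero (R := R))

end Tr
section CS
set_option linter.unusedSectionVars false
variable {R : Type*} [CommRing R] [CharP R 4] {m : ℕ} {T : Finset R} {Tr : R → ZMod 4}

local notation "c" => ZMod.castHom (dvd_refl 4) R

lemma G_zero (hm : Odd m) (hT : ∀ z : R, z ∈ T ↔ z ^ 2 ^ m = z)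
    (hTr : ∀ x ∈ T, ∀ y ∈ T, c (Tr (x + 2 * y)) = ∑ j ∈ Finset.range m, (x ^ 2 ^ j + 2 * y ^ 2 ^ j)) :
    ∑ b ∈ T, zi (Tr (2 * b)) = 0 := by
  have hm1 : 1 ≤ m := hm.pos
  set σ : R → R := fun b => (b + 1) ^ 2 ^ m with hσ
  have hσT : ∀ b ∈ T, σ b ∈ T := fun b hb => (frob_spec hm1 hT hb (mem_T_one hT)).1
  have hσinv : ∀ b ∈ T, σ (σ b) = b := by
    intro b hb
    obtain ⟨-, ⟨t, hft⟩, -⟩ := frob_spec hm1 hT hb (mem_T_one hT)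
    have h1 : σ b + 1 = b + 2 * (1 + t) := by rw [hσ]; simp only []; rw [hft]; ring
    calc σ (σ b) = (σ b + 1) ^ 2 ^ m := rfl
      _ = (b + 2 * (1 + t)) ^ 2 ^ m := by rw [h1]
      _ = b ^ 2 ^ m := pow_add_two_mul m hm1 b (1 + t)
      _ = b := (hT b).mp hb
  have hre : ∑ b ∈ T, zi (Tr (2 * σ b)) = ∑ b ∈ T, zi (Tr (2 * b)) :=
    Finset.sum_nbij' σ σ hσT hσT hσinv hσinv (fun b hb => rfl)
  have hpt : ∀ b ∈ T, zi (Tr (2 * σ b)) = - zi (Tr (2 * b)) := by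
    intro b hb
    obtain ⟨-, -, h2σ⟩ := frob_spec hm1 hT hb (mem_T_one hT)
    have e1 : Tr (2 * σ b) = Tr (2 * b) + Tr (2 * 1) := by
      rw [show (2 : R) * σ b = 2 * b + 2 * 1 by rw [h2σ]]
      exact Tr2_add hm1 hT hTr hb (mem_T_one hT)
    rw [e1, zi_add, show (2 : R) * 1 = 2 by ring, Tr_two_val hm hT hTr, zi_two]
    ring
  have h2 : ∑ b ∈ T, zi (Tr (2 * b)) = - ∑ b ∈ T, zi (Tr (2 * b)) := by
    conv_lhs => rw [← hre]
    rw [Finset.sum_congr rfl hpt, Finset.sum_neg_distrib]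
  have h3 : (2 : ℂ) * ∑ b ∈ T, zi (Tr (2 * b)) = 0 := by linear_combination h2
  have := mul_eq_zero.mp h3
  simpa using this

lemma CS_zero (hm : Odd m) [IsLocalRing R]
    (hmax : IsLocalRing.maximalIdeal R = Ideal.span {2})
    (hT : ∀ z : R, z ∈ T ↔ z ^ 2 ^ m = z)
    (hTr : ∀ x ∈ T, ∀ y ∈ T, c (Tr (x + 2 * y)) = ∑ j ∈ Finset.range m, (x ^ 2 ^ j + 2 * y ^ 2 ^ j))
    {z : R} (hz : z ∈ T) (hz0 : z ≠ 0) :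
    ∑ b ∈ T, zi (Tr (2 * (b * z))) = 0 := by
  have hm1 : 1 ≤ m := hm.pos
  -- z is a unit
  have hunit : IsUnit z := by
    by_contra hnu
    have hmem : z ∈ IsLocalRing.maximalIdeal R :=
      (IsLocalRing.mem_maximalIdeal z).mpr hnu
    rw [hmax, Ideal.mem_span_singleton] at hmem
    obtain ⟨t, ht⟩ := hmem
    have : z = 0 := by
      rw [← (hT z).mp hz, ht]
      exact tt_pow t (by calc 2 = 2 ^ 1 := (pow_one 2).symm
        _ ≤ 2 ^ m := Nat.pow_le_pow_right (by norm_num) hm1)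
    exact hz0 this
  obtain ⟨ζ, hζ⟩ := hunit
  have hζpow : ζ ^ 2 ^ m = ζ := by
    apply Units.ext
    push_cast [hζ]
    exact (hT z).mp hz
  have hinvT : ((ζ⁻¹ : Rˣ) : R) ∈ T := by
    refine (hT _).mpr ?_
    calc ((ζ⁻¹ : Rˣ) : R) ^ 2 ^ m = (((ζ⁻¹ : Rˣ) ^ 2 ^ m : Rˣ) : R) := by push_cast; ring
      _ = (((ζ ^ 2 ^ m)⁻¹ : Rˣ) : R) := by rw [← inv_pow]
      _ = ((ζ⁻¹ : Rˣ) : R) := by rw [hζpow]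
  have hre : ∑ b ∈ T, zi (Tr (2 * (b * z))) = ∑ w ∈ T, zi (Tr (2 * w)) := by
    refine Finset.sum_nbij' (fun b => b * z) (fun w => w * ((ζ⁻¹ : Rˣ) : R))
      (fun b hb => mem_T_mul hT hb hz) (fun w hw => mem_T_mul hT hw hinvT) ?_ ?_
      (fun b hb => rfl)
    · intro b hb
      calc b * z * ((ζ⁻¹ : Rˣ) : R) = b * (z * ((ζ⁻¹ : Rˣ) : R)) := by ring
        _ = b := by rw [← hζ, Units.mul_inv, mul_one]
    · intro w hw
      calc w * ((ζ⁻¹ : Rˣ) : R) * z = w * (((ζ⁻¹ : Rˣ) : R) * z) := by ring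
        _ = w := by rw [← hζ, Units.inv_mul, mul_one]
  rw [hre]
  exact G_zero hm hT hTr

end CS
section Key
set_option linter.unusedSectionVars false
variable {R : Type*} [CommRing R] [CharP R 4] [IsLocalRing R] {m : ℕ} {T : Finset R}
  {Tr : R → ZMod 4}

local notation "c" => ZMod.castHom (dvd_refl 4) R

lemma key (hm : Odd m)
    (hmax : IsLocalRing.maximalIdeal R = Ideal.span {2})
    (hT : ∀ z : R, z ∈ T ↔ z ^ 2 ^ m = z)
    (hTr : ∀ x ∈ T, ∀ y ∈ T, c (Tr (x + 2 * y)) = ∑ j ∈ Finset.range m, (x ^ 2 ^ j + 2 * y ^ 2 ^ j))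
    (ε δ : ZMod 4) (hε : ε = 1 ∨ ε = 3) (hδ : δ = 1 ∨ δ = 3)
    {a : R} (haT : a ∈ T) (ha1 : a ≠ 1) :
    ∑ b ∈ T, (∑ x ∈ T, zi (ε * Tr ((a + 2 * b) * x))) *
      (∑ y ∈ T, zi (δ * Tr ((a + 2 * b + 2) * y))) = 0 := by
  have hm1 : 1 ≤ m := hm.pos
  have step1 : ∀ b ∈ T, ∀ x ∈ T,
      ε * Tr ((a + 2 * b) * x) = ε * Tr (a * x) + Tr (2 * (b * x)) := by
    intro b hb x hx
    have he : (a + 2 * b) * x = a * x + 2 * (b * x) := by ring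
    rw [he, Tr_split hT hTr (mem_T_mul hT haT hx) (mem_T_mul hT hb hx), mul_add,
      odd_mul ε hε _ (two_Tr2 hT hTr (mem_T_mul hT hb hx))]
  have step2 : ∀ b ∈ T, ∀ y ∈ T,
      δ * Tr ((a + 2 * b + 2) * y) = δ * Tr (a * y) + (Tr (2 * (b * y)) + Tr (2 * y)) := by
    intro b hb y hy
    obtain ⟨hwT, -, h2w⟩ := frob_spec hm1 hT (mem_T_mul hT hb hy) hy
    have he : (a + 2 * b + 2) * y = a * y + 2 * ((b * y + y) ^ 2 ^ m) := by
      rw [h2w]; ring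
    rw [he, Tr_split hT hTr (mem_T_mul hT haT hy) hwT, mul_add,
      odd_mul δ hδ _ (two_Tr2 hT hTr hwT)]
    congr 1
    rw [show (2 : R) * ((b * y + y) ^ 2 ^ m) = 2 * (b * y) + 2 * y from h2w,
      Tr2_add hm1 hT hTr (mem_T_mul hT hb hy) hy]
  calc ∑ b ∈ T, (∑ x ∈ T, zi (ε * Tr ((a + 2 * b) * x))) *
        (∑ y ∈ T, zi (δ * Tr ((a + 2 * b + 2) * y)))
      = ∑ b ∈ T, ∑ x ∈ T, ∑ y ∈ T,
          zi (ε * Tr ((a + 2 * b) * x)) * zi (δ * Tr ((a + 2 * b + 2) * y)) := by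
        exact Finset.sum_congr rfl fun b hb => Finset.sum_mul_sum T T _ _
    _ = ∑ x ∈ T, ∑ y ∈ T, ∑ b ∈ T,
          zi (ε * Tr ((a + 2 * b) * x)) * zi (δ * Tr ((a + 2 * b + 2) * y)) := by
        rw [Finset.sum_comm]
        exact Finset.sum_congr rfl fun x hx => Finset.sum_comm
    _ = ∑ x ∈ T, ∑ y ∈ T, zi (ε * Tr (a * x) + δ * Tr (a * y) + Tr (2 * y)) *
          ∑ b ∈ T, zi (Tr (2 * (b * ((x + y) ^ 2 ^ m)))) := by
        refine Finset.sum_congr rfl fun x hx => Finset.sum_congr rfl fun y hy => ?_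
        rw [Finset.mul_sum]
        refine Finset.sum_congr rfl fun b hb => ?_
        rw [step1 b hb x hx, step2 b hb y hy]
        have hb3 : Tr (2 * (b * ((x + y) ^ 2 ^ m))) = Tr (2 * (b * x)) + Tr (2 * (b * y)) := by
          obtain ⟨-, -, h2w⟩ := frob_spec hm1 hT hx hy
          rw [show (2 : R) * (b * ((x + y) ^ 2 ^ m)) = 2 * (b * x) + 2 * (b * y) by
            linear_combination b * h2w,
            Tr2_add hm1 hT hTr (mem_T_mul hT hb hx) (mem_T_mul hT hb hy)]
        rw [hb3]
        simp only [zi_add]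
        ring
    _ = ∑ x ∈ T, zi (ε * Tr (a * x) + δ * Tr (a * x) + Tr (2 * x)) * (T.card : ℂ) := by
        refine Finset.sum_congr rfl fun x hx => ?_
        rw [Finset.sum_eq_single_of_mem x hx ?_]
        · have hz : (x + x) ^ 2 ^ m = 0 := (diag_iff hm1 hT hx hx).mpr rfl
          have hone : ∀ b ∈ T, zi (Tr (2 * (b * ((x + x) ^ 2 ^ m)))) = 1 := by
            intro b hb
            rw [hz, mul_zero, mul_zero, Tr_zero hT hTr, zi_zero]
          rw [Finset.sum_congr rfl hone, Finset.sum_const, nsmul_eq_mul, mul_one]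
        · intro y hy hyx
          have hzT := (frob_spec hm1 hT hx hy).1
          have hz0 : (x + y) ^ 2 ^ m ≠ 0 := fun h =>
            hyx ((diag_iff hm1 hT hx hy).mp h).symm
          rw [CS_zero hm hmax hT hTr hzT hz0, mul_zero]
    _ = (T.card : ℂ) * ∑ x ∈ T, zi ((ε + δ) * Tr (a * x) + Tr (2 * x)) := by
        rw [← Finset.sum_mul, mul_comm]
        congr 1
        exact Finset.sum_congr rfl fun x hx => by rw [add_mul]
    _ = 0 := by
        have hsum0 : ∑ x ∈ T, zi ((0 : ZMod 4) * Tr (a * x) + Tr (2 * x)) = 0 := by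
          simp only [zero_mul, zero_add]
          exact G_zero hm hT hTr
        have hsum2 : ∑ x ∈ T, zi ((2 : ZMod 4) * Tr (a * x) + Tr (2 * x)) = 0 := by
          have ha'T := (frob_spec hm1 hT haT (mem_T_one hT)).1
          have ha'0 : (a + 1) ^ 2 ^ m ≠ 0 := fun h =>
            ha1 ((diag_iff hm1 hT haT (mem_T_one hT)).mp h)
          have hpt : ∀ x ∈ T, zi ((2 : ZMod 4) * Tr (a * x) + Tr (2 * x)) =
              zi (Tr (2 * (x * ((a + 1) ^ 2 ^ m)))) := by
            intro x hx
            congr 1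
            rw [two_Tr_x hT hTr (mem_T_mul hT haT hx),
              ← Tr2_add hm1 hT hTr (mem_T_mul hT haT hx) hx]
            congr 1
            obtain ⟨-, -, h2a⟩ := frob_spec hm1 hT haT (mem_T_one hT)
            linear_combination (-x) * h2a
          rw [Finset.sum_congr rfl hpt]
          exact CS_zero hm hmax hT hTr ha'T ha'0
        rcases hε with rfl | rfl <;> rcases hδ with rfl | rfl
        · rw [show (1 : ZMod 4) + 1 = 2 by decide, hsum2, mul_zero]
        · rw [show (1 : ZMod 4) + 3 = 0 by decide, hsum0, mul_zero]
        · rw [show (3 : ZMod 4) + 1 = 0 by decide, hsum0, mul_zero]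
        · rw [show (3 : ZMod 4) + 3 = 2 by decide, hsum2, mul_zero]

end Key
theorem stmt_3 (m : ℕ) (hm : Odd m)
    (R : Type*) [CommRing R] [Fintype R] [DecidableEq R]
    -- `R` is the Galois ring GR(4,m): the finite local commutative ring of
    -- characteristic 4 and cardinality 4^m whose maximal ideal is (2)
    [CharP R 4] [IsLocalRing R]
    (hcard : Fintype.card R = 4 ^ m)
    (hmax : IsLocalRing.maximalIdeal R = Ideal.span {2})
    -- `T` is the Teichmüller set of `R`
    (T : Finset R) (hT : ∀ z : R, z ∈ T ↔ z ^ 2 ^ m = z)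
    -- `Tr` is the trace function from `R` to `ℤ/4ℤ`
    (Tr : R → ZMod 4)
    (hTr : ∀ x ∈ T, ∀ y ∈ T,
      (ZMod.castHom (dvd_refl 4) R) (Tr (x + 2 * y)) =
        ∑ j ∈ Finset.range m, (x ^ 2 ^ j + 2 * y ^ 2 ^ j)) :
    (∑ a ∈ T \ {0, 1}, ∑ b ∈ T,
        Splus T Tr (a + 2 * b) * Splus T Tr (a + 2 * b + 2)) = 0 ∧
    (∑ a ∈ T \ {0, 1}, ∑ b ∈ T,
        Sminus T Tr (a + 2 * b) * Sminus T Tr (a + 2 * b + 2)) = 0 := by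
  have main : ∀ a ∈ T \ ({0, 1} : Finset R),
      (∑ b ∈ T, Splus T Tr (a + 2 * b) * Splus T Tr (a + 2 * b + 2)) = 0 ∧
      (∑ b ∈ T, Sminus T Tr (a + 2 * b) * Sminus T Tr (a + 2 * b + 2)) = 0 := by
    intro a ha
    rw [Finset.mem_sdiff] at ha
    obtain ⟨haT, hnot⟩ := ha
    have ha1 : a ≠ 1 := fun h => hnot (by simp [h])
    have k11 := key hm hmax hT hTr 1 1 (Or.inl rfl) (Or.inl rfl) haT ha1
    have k13 := key hm hmax hT hTr 1 3 (Or.inl rfl) (Or.inr rfl) haT ha1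
    have k31 := key hm hmax hT hTr 3 1 (Or.inr rfl) (Or.inl rfl) haT ha1
    have k33 := key hm hmax hT hTr 3 3 (Or.inr rfl) (Or.inr rfl) haT ha1
    simp only [one_mul] at k11 k13 k31
    constructor
    · have hexp : ∀ b ∈ T, Splus T Tr (a + 2 * b) * Splus T Tr (a + 2 * b + 2) =
          (∑ x ∈ T, zi (Tr ((a + 2 * b) * x))) * (∑ y ∈ T, zi (Tr ((a + 2 * b + 2) * y)))
          + ((∑ x ∈ T, zi (Tr ((a + 2 * b) * x))) *
              (∑ y ∈ T, zi (3 * Tr ((a + 2 * b + 2) * y)))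
          + ((∑ x ∈ T, zi (3 * Tr ((a + 2 * b) * x))) *
              (∑ y ∈ T, zi (Tr ((a + 2 * b + 2) * y)))
          + (∑ x ∈ T, zi (3 * Tr ((a + 2 * b) * x))) *
              (∑ y ∈ T, zi (3 * Tr ((a + 2 * b + 2) * y))))) := by
        intro b _
        simp only [Splus]
        ring
      rw [Finset.sum_congr rfl hexp, Finset.sum_add_distrib, Finset.sum_add_distrib,
        Finset.sum_add_distrib, k11, k13, k31, k33]
      ring
    · have hexp : ∀ b ∈ T, Sminus T Tr (a + 2 * b) * Sminus T Tr (a + 2 * b + 2) =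
          (∑ x ∈ T, zi (Tr ((a + 2 * b) * x))) * (∑ y ∈ T, zi (Tr ((a + 2 * b + 2) * y)))
          + (-((∑ x ∈ T, zi (Tr ((a + 2 * b) * x))) *
              (∑ y ∈ T, zi (3 * Tr ((a + 2 * b + 2) * y))))
          + (-((∑ x ∈ T, zi (3 * Tr ((a + 2 * b) * x))) *
              (∑ y ∈ T, zi (Tr ((a + 2 * b + 2) * y))))
          + (∑ x ∈ T, zi (3 * Tr ((a + 2 * b) * x))) *
              (∑ y ∈ T, zi (3 * Tr ((a + 2 * b + 2) * y))))) := by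
        intro b _
        simp only [Sminus]
        ring
      rw [Finset.sum_congr rfl hexp, Finset.sum_add_distrib, Finset.sum_add_distrib,
        Finset.sum_add_distrib, Finset.sum_neg_distrib, Finset.sum_neg_distrib,
        k11, k13, k31, k33]
      ring
  exact ⟨Finset.sum_eq_zero fun a ha => (main a ha).1,
    Finset.sum_eq_zero fun a ha => (main a ha).2⟩
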